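/- For all τ₁, τ₂ > 0 and all t, s > 0, the following inequality holds: (min(τ₁², τ₂²)) · (log t − log s)² ≥ (1/2) (min(τ₁², τ₂²)) · (log(t/τ₁) − log(s/τ₂))² − (τ₁ − τ₂)². -/
import Mathlib

lemma aux_min_log_sq {a b : ℝ} (ha : 0 < a) (hb : 0 < b) (hab : a ≤ b) :
    min (a ^ 2) (b ^ 2) * (Real.log a - Real.log b) ^ 2 ≤ (a - b) ^ 2 := by
  have hmin : min (a ^ 2) (b ^ 2) = a ^ 2 := min_eq_left (by nlinarith)
  rw [hmin]
  have h1 : Real.log b - Real.log a ≤ b / a - 1 := by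
    have := Real.log_le_sub_one_of_pos (x := b / a) (by positivity)
    rwa [Real.log_div hb.ne' ha.ne'] at this
  have h2 : 0 ≤ Real.log b - Real.log a := by
    have := Real.log_le_log ha hab
    linarith
  have h3 : a * (Real.log b - Real.log a) ≤ b - a := by
    have := mul_le_mul_of_nonneg_left h1 ha.le
    have : a * (b / a - 1) = b - a := by field_simp
    nlinarith [mul_le_mul_of_nonneg_left h1 ha.le]
  nlinarith [mul_nonneg ha.le h2]

lemma aux_min_log_sq' {a b : ℝ} (ha : 0 < a) (hb : 0 < b) :
    min (a ^ 2) (b ^ 2) * (Real.log a - Real.log b) ^ 2 ≤ (a - b) ^ 2 := by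
  rcases le_total a b with h | h
  · exact aux_min_log_sq ha hb h
  · have := aux_min_log_sq hb ha h
    rw [min_comm] at this
    nlinarith [this]

lemma aux_alg {m x y c : ℝ} (hm : 0 ≤ m) (h : m * (y) ^ 2 ≤ c) :
    (1 / 2) * m * (x + y) ^ 2 - c ≤ m * x ^ 2 := by
  nlinarith [mul_nonneg hm (sq_nonneg (x - y))]

/-- **Lemma (algebraic logarithmic inequality, Lemma 3.5).**
For all `τ₁, τ₂ > 0` and `t, s > 0`:
`min(τ₁²,τ₂²)(log t - log s)² ≥ (1/2) min(τ₁²,τ₂²)(log(t/τ₁) - log(s/τ₂))² - (τ₁-τ₂)²`. -/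
theorem log_weighted_inequality (τ₁ τ₂ t s : ℝ)
    (hτ₁ : 0 < τ₁) (hτ₂ : 0 < τ₂) (ht : 0 < t) (hs : 0 < s) :
    (1 / 2) * min (τ₁ ^ 2) (τ₂ ^ 2) * (Real.log (t / τ₁) - Real.log (s / τ₂)) ^ 2
        - (τ₁ - τ₂) ^ 2
      ≤ min (τ₁ ^ 2) (τ₂ ^ 2) * (Real.log t - Real.log s) ^ 2 := by
  have key := aux_min_log_sq' hτ₂ hτ₁
  rw [min_comm] at key
  rw [Real.log_div ht.ne' hτ₁.ne', Real.log_div hs.ne' hτ₂.ne']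
  have hm : 0 ≤ min (τ₁ ^ 2) (τ₂ ^ 2) := le_min (by positivity) (by positivity)
  have habs : Real.log t - Real.log τ₁ - (Real.log s - Real.log τ₂)
      = (Real.log t - Real.log s) + (Real.log τ₂ - Real.log τ₁) := by ring
  rw [habs]
  have key' : (τ₁ ^ 2 ⊓ τ₂ ^ 2) * (Real.log τ₂ - Real.log τ₁) ^ 2 ≤ (τ₁ - τ₂) ^ 2 := by nlinarith
  exact aux_alg hm key'
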